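/- arXiv:1910.04905 — 2 statements merged into one kernel-verified Lean document; each statement's English description precedes it below -/
import Mathlib

section
/- Let Ω ⊂ ℝⁿ (n ≥ 2) be a bounded open convex set and u a first Dirichlet eigenfunction of Ω normalized so that max_Ω u = 1, extended by zero outside Ω. Let E be a John ellipsoid of the convex superlevel set Ω_{1/2} = {x ∈ Ω : u(x) > 1/2}, with orthonormal axis directions v₁, …, v_n and corresponding axis lengths M₁ ≥ M₂ ≥ ⋯ ≥ M_n. Then there exists a constant c₃ > 0, depending only on n, such that for each 1 ≤ k ≤ n−1 there is a unit vector w in the span of the coordinate vectors e₁, …, e_k with sup_t ∫_{Ω ∩ {x·w = t}} |u(x)|² dσ_{n−1}(x) ≥ c₃ · ∏_{j=1, j≠k}^{n} M_j, where dσ_{n−1} is (n−1)-dimensional surface measure on the hyperplane {x·w = t}. -/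
open MeasureTheory
open scoped RealInnerProductSpace

/-- The first Dirichlet eigenvalue of a set `U ⊆ ℝ^d`, defined via the variational
(Rayleigh quotient) formulation over smooth compactly supported test functions. -/
noncomputable def dirichletEigenvalue (d : ℕ) (U : Set (EuclideanSpace ℝ (Fin d))) : ℝ :=
  sInf { r : ℝ | ∃ v : EuclideanSpace ℝ (Fin d) → ℝ,
    ContDiff ℝ (⊤ : ℕ∞) v ∧ HasCompactSupport v ∧ tsupport v ⊆ U ∧ v ≠ 0 ∧
    r = (∫ x, ‖fderiv ℝ v x‖ ^ 2) / ∫ x, (v x) ^ 2 }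

/-- The Laplacian of `u : ℝ^d → ℝ`. -/
noncomputable def lap (d : ℕ) (u : EuclideanSpace ℝ (Fin d) → ℝ)
    (x : EuclideanSpace ℝ (Fin d)) : ℝ :=
  ∑ i : Fin d, fderiv ℝ (fun y => fderiv ℝ u y (EuclideanSpace.single i 1)) x
    (EuclideanSpace.single i 1)

/-- `u` is a first Dirichlet eigenfunction of `U`: continuous on `ℝ^d`, vanishing outside `U`
(the extension by zero of an `H¹₀(U)` function), smooth and positive in `U`, and satisfying
`Δu + λ(U) u = 0` in `U`. -/
def IsFirstEigenfunction (d : ℕ) (U : Set (EuclideanSpace ℝ (Fin d)))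
    (u : EuclideanSpace ℝ (Fin d) → ℝ) : Prop :=
  Continuous u ∧ (∀ x, x ∉ U → u x = 0) ∧ ContDiffOn ℝ (⊤ : ℕ∞) u U ∧ (∀ x ∈ U, 0 < u x) ∧
  ∀ x ∈ U, lap d u x + dirichletEigenvalue d U * u x = 0

/-- The ellipsoid with centre `c`, (orthonormal) axis directions `v i` and axis lengths `N i`
(so semi-axes `N i / 2`). -/
noncomputable def ellipsoid (d : ℕ) (c : EuclideanSpace ℝ (Fin d))
    (v : Fin d → EuclideanSpace ℝ (Fin d)) (N : Fin d → ℝ) : Set (EuclideanSpace ℝ (Fin d)) :=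
  { x | ∑ i : Fin d, (⟪x - c, v i⟫ / (N i / 2)) ^ 2 ≤ 1 }

/-- `(c, v, N)` describes a John ellipsoid of `Q`: an ellipsoid contained in `Q` whose dilation
about its centre by the factor `d` contains `Q`. -/
def IsJohnEllipsoid (d : ℕ) (Q : Set (EuclideanSpace ℝ (Fin d))) (c : EuclideanSpace ℝ (Fin d))
    (v : Fin d → EuclideanSpace ℝ (Fin d)) (N : Fin d → ℝ) : Prop :=
  Orthonormal ℝ v ∧ (∀ i, 0 < N i) ∧ ellipsoid d c v N ⊆ Q ∧
    Q ⊆ ellipsoid d c v (fun i => d * N i)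

/-- The vector in `ℝ^d` whose first `i` coordinates are `Y` and last `d - i` coordinates are `X`. -/
noncomputable def splice (d i : ℕ) (Y : EuclideanSpace ℝ (Fin i))
    (X : EuclideanSpace ℝ (Fin (d - i))) : EuclideanSpace ℝ (Fin d) :=
  WithLp.toLp 2 (fun j : Fin d => if h : (j : ℕ) < i then Y ⟨j, h⟩ else X ⟨(j : ℕ) - i, by have := j.isLt; omega⟩)

/-- The `(d-i)`-dimensional cross-section `W(Y) = { X' : (Y, X') ∈ W }`. -/
def crossSection (d i : ℕ) (W : Set (EuclideanSpace ℝ (Fin d)))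
    (Y : EuclideanSpace ℝ (Fin i)) : Set (EuclideanSpace ℝ (Fin (d - i))) :=
  { X | splice d i Y X ∈ W }

/-- `μ_i^*(W)`: the infimum of the first Dirichlet eigenvalues of the nonempty
`(d-i)`-dimensional cross-sections of `W`. -/
noncomputable def muStar (d i : ℕ) (W : Set (EuclideanSpace ℝ (Fin d))) : ℝ :=
  sInf { r : ℝ | ∃ Y : EuclideanSpace ℝ (Fin i), (crossSection d i W Y).Nonempty ∧
    r = dirichletEigenvalue (d - i) (crossSection d i W Y) }

/-- The sup-norm of `u`. -/
noncomputable def supNorm (d : ℕ) (u : EuclideanSpace ℝ (Fin d) → ℝ) : ℝ :=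
  sSup (Set.range fun x => |u x|)

set_option maxHeartbeats 1000000

open scoped ENNReal NNReal

lemma aux_exists_w (n k : ℕ) (hk1 : 1 ≤ k) (hkn : k + 1 ≤ n)
    (v : Fin n → EuclideanSpace ℝ (Fin n)) (hv : Orthonormal ℝ v) :
    ∃ w : EuclideanSpace ℝ (Fin n),
      w ∈ Submodule.span ℝ
        ((fun i : Fin n => EuclideanSpace.single i (1 : ℝ)) '' {i | (i : ℕ) < k}) ∧
      ‖w‖ = 1 ∧ ∀ i : Fin n, (i : ℕ) < k - 1 → ⟪v i, w⟫ = 0 := by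
  classical
  have hkn' : k ≤ n := Nat.le_of_succ_le hkn

  set S : Submodule ℝ (EuclideanSpace ℝ (Fin n)) := Submodule.span ℝ
    ((fun i : Fin n => EuclideanSpace.single i (1 : ℝ)) '' {i | (i : ℕ) < k}) with hS
  set K : Submodule ℝ (EuclideanSpace ℝ (Fin n)) := Submodule.span ℝ (v '' {i | (i : ℕ) < k - 1}) with hK
  have hrankE : Module.finrank ℝ (EuclideanSpace ℝ (Fin n)) = n := finrank_euclideanSpace_fin
  -- finrank S ≥ k
  have hfinS : k ≤ Module.finrank ℝ S := by
    have hg : LinearIndependent ℝ (fun j : Fin k =>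
        EuclideanSpace.single (Fin.castLE hkn' j : Fin n) (1 : ℝ)) := by
      have h1 : Orthonormal ℝ (fun i : Fin n => EuclideanSpace.single i (1 : ℝ)) :=
        EuclideanSpace.orthonormal_single
      exact (h1.comp (Fin.castLE hkn') (Fin.strictMono_castLE hkn').injective).linearIndependent
    have hle : Submodule.span ℝ (Set.range (fun j : Fin k =>
        EuclideanSpace.single (Fin.castLE hkn' j : Fin n) (1 : ℝ))) ≤ S := by
      apply Submodule.span_mono
      rintro x ⟨j, rfl⟩
      exact ⟨Fin.castLE hkn' j, by simpa using j.isLt, rfl⟩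
    have h2 := finrank_span_eq_card hg
    simp only [Fintype.card_fin] at h2
    calc k = Module.finrank ℝ (Submodule.span ℝ (Set.range (fun j : Fin k =>
          EuclideanSpace.single (Fin.castLE hkn' j : Fin n) (1 : ℝ)))) := h2.symm
      _ ≤ Module.finrank ℝ S := Submodule.finrank_mono hle
  -- finrank K ≤ k - 1
  have hfinK : Module.finrank ℝ K ≤ k - 1 := by
    have h1 : (v '' {i : Fin n | (i : ℕ) < k - 1}).Finite := Set.toFinite _
    have h2 : K ≤ Submodule.span ℝ (h1.toFinset : Set (EuclideanSpace ℝ (Fin n))) := by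
      rw [Set.Finite.coe_toFinset]
    refine le_trans (Submodule.finrank_mono h2) (le_trans (finrank_span_finset_le_card _) ?_)
    have h3 : (h1.toFinset).card = (v '' {i : Fin n | (i : ℕ) < k - 1}).ncard := by
      rw [Set.ncard_eq_toFinset_card']
      congr 1
      ext x
      simp
    rw [h3]
    refine le_trans (Set.ncard_image_le (Set.toFinite _)) ?_
    have : Nat.card {i : Fin n | (i:ℕ) < k - 1} ≤ Nat.card (Fin (k-1)) := by
      apply Nat.card_le_card_of_injective (fun x => (⟨x.1.1, x.2⟩ : Fin (k-1)))
      intro a b hab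
      ext
      simpa [Fin.ext_iff] using hab
    rw [Nat.card_coe_set_eq] at this
    simpa using this
  -- intersection nonzero
  have hfinKo : n - (k - 1) ≤ Module.finrank ℝ Kᗮ := by
    have h6 := Submodule.finrank_add_finrank_orthogonal K
    rw [hrankE] at h6
    omega
  have hpos : 0 < Module.finrank ℝ (S ⊓ Kᗮ : Submodule ℝ (EuclideanSpace ℝ (Fin n))) := by
    have h4 := Submodule.finrank_sup_add_finrank_inf_eq S Kᗮ
    have h5 := Submodule.finrank_le (S ⊔ Kᗮ : Submodule ℝ (EuclideanSpace ℝ (Fin n)))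
    rw [hrankE] at h5
    omega
  obtain ⟨x, hx⟩ := Module.finrank_pos_iff_exists_ne_zero.mp hpos
  have hx0 : (x : EuclideanSpace ℝ (Fin n)) ≠ 0 := fun h => hx (Subtype.ext h)
  refine ⟨‖(x : EuclideanSpace ℝ (Fin n))‖⁻¹ • (x : EuclideanSpace ℝ (Fin n)), ?_, norm_smul_inv_norm hx0, ?_⟩
  · exact Submodule.smul_mem _ _ x.2.1
  · intro i hi
    have hxo : (x : EuclideanSpace ℝ (Fin n)) ∈ Kᗮ := x.2.2
    have hvi : v i ∈ K := Submodule.subset_span ⟨i, hi, rfl⟩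
    have := (Submodule.mem_orthogonal K (x : EuclideanSpace ℝ (Fin n))).mp hxo (v i) hvi
    rw [real_inner_smul_right, this, mul_zero]

lemma aux_onb_ (n : ℕ) (hn : 0 < n) (v : Fin n → EuclideanSpace ℝ (Fin n))
    (hv : Orthonormal ℝ v) :
    ∃ b : OrthonormalBasis (Fin n) ℝ (EuclideanSpace ℝ (Fin n)), ∀ i, b i = v i := by
  haveI : Nonempty (Fin n) := ⟨⟨0, hn⟩⟩
  have hcard : Fintype.card (Fin n) = Module.finrank ℝ (EuclideanSpace ℝ (Fin n)) := by
    simp [finrank_euclideanSpace_fin]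
  have hsp : ⊤ ≤ Submodule.span ℝ (Set.range v) :=
    (hv.linearIndependent.span_eq_top_of_card_eq_finrank hcard).ge
  exact ⟨OrthonormalBasis.mk hv hsp, fun i => by simp [OrthonormalBasis.coe_mk]⟩

lemma aux_slab (n k : ℕ) (hk1 : 1 ≤ k) (hkn : k + 1 ≤ n)
    (v : Fin n → EuclideanSpace ℝ (Fin n)) (hv : Orthonormal ℝ v)
    (M : Fin n → ℝ) (hMpos : ∀ i, 0 < M i) (hM : ∀ i j : Fin n, i ≤ j → M j ≤ M i)
    (w y₀ x : EuclideanSpace ℝ (Fin n)) (hw : ‖w‖ = 1)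
    (hworth : ∀ i : Fin n, (i : ℕ) < k - 1 → ⟪v i, w⟫ = 0)
    (hx : ∑ i : Fin n, (⟪x - y₀, v i⟫ / (M i / 2)) ^ 2 ≤ 1) :
    |⟪x, w⟫ - ⟪y₀, w⟫| ≤ M (⟨k - 1, by omega⟩ : Fin n) / 2 := by
  classical
  obtain ⟨b, hb⟩ := aux_onb_ n (by omega) v hv
  set κ : Fin n := ⟨k - 1, by omega⟩ with hκ
  have hPar : ∀ a c : EuclideanSpace ℝ (Fin n), ∑ i, ⟪a, v i⟫ * ⟪v i, c⟫ = ⟪a, c⟫ := by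
    intro a c
    have := b.sum_inner_mul_inner a c
    simp only [hb] at this
    exact this
  have hww : ∑ i, ⟪v i, w⟫ ^ 2 = 1 := by
    have h2 := hPar w w
    rw [real_inner_self_eq_norm_sq, hw] at h2
    calc ∑ i, ⟪v i, w⟫ ^ 2 = ∑ i, ⟪w, v i⟫ * ⟪v i, w⟫ := by
          refine Finset.sum_congr rfl fun i _ => ?_
          rw [real_inner_comm (v i) w]; ring
      _ = 1 := by rw [h2]; norm_num
  have key : ⟪x, w⟫ - ⟪y₀, w⟫ = ∑ i, ⟪x - y₀, v i⟫ * ⟪v i, w⟫ := by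
    rw [hPar, inner_sub_left]
  set c : Fin n → ℝ := fun i => ⟪x - y₀, v i⟫ with hc
  set W : Fin n → ℝ := fun i => ⟪v i, w⟫ with hW
  set F : Finset (Fin n) := (Finset.univ : Finset (Fin n)).filter
    (fun i => k - 1 ≤ (i : ℕ)) with hF
  have hsumF : ∑ i, c i * W i = ∑ i ∈ F, c i * W i := by
    rw [← Finset.sum_filter_add_sum_filter_not (Finset.univ : Finset (Fin n))
      (fun i => k - 1 ≤ (i : ℕ)) (fun i : Fin n => c i * W i)]
    have hz : ∑ i ∈ (Finset.univ : Finset (Fin n)).filter (fun i : Fin n => ¬ k - 1 ≤ (i : ℕ)),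
        c i * W i = 0 := by
      apply Finset.sum_eq_zero
      intro i hi
      simp only [Finset.mem_filter, not_le] at hi
      have : W i = 0 := hworth i hi.2
      rw [this, mul_zero]
    rw [hz, add_zero]
  have hCS := Finset.sum_mul_sq_le_sq_mul_sq F (fun i => c i / (M i / 2))
      (fun i => (M i / 2) * W i)
  have hprod : ∀ i ∈ F, c i / (M i / 2) * ((M i / 2) * W i) = c i * W i := by
    intro i _
    have := (hMpos i).ne'
    field_simp
  rw [Finset.sum_congr rfl hprod] at hCS
  have hA : ∑ i ∈ F, (c i / (M i / 2)) ^ 2 ≤ 1 := by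
    refine le_trans (Finset.sum_le_sum_of_subset_of_nonneg (Finset.subset_univ F)
      (fun i _ _ => sq_nonneg _)) hx
  have hB : ∑ i ∈ F, ((M i / 2) * W i) ^ 2 ≤ (M κ / 2) ^ 2 := by
    have hBB : ∀ i ∈ F, ((M i / 2) * W i) ^ 2 ≤ (M κ / 2) ^ 2 * W i ^ 2 := by
      intro i hi
      simp only [hF, Finset.mem_filter] at hi
      have hκi : κ ≤ i := by
        rw [Fin.le_def]
        exact hi.2
      have h1 : 0 < M i := hMpos i
      have h2 : M i ≤ M κ := hM κ i hκi
      have : (M i / 2) ^ 2 ≤ (M κ / 2) ^ 2 := by nlinarith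
      calc ((M i / 2) * W i) ^ 2 = (M i / 2) ^ 2 * W i ^ 2 := by ring
        _ ≤ (M κ / 2) ^ 2 * W i ^ 2 := by nlinarith [sq_nonneg (W i)]
    refine le_trans (Finset.sum_le_sum hBB) ?_
    rw [← Finset.mul_sum]
    have hWle : ∑ i ∈ F, W i ^ 2 ≤ 1 := by
      refine le_trans (Finset.sum_le_sum_of_subset_of_nonneg (Finset.subset_univ F)
        (fun i _ _ => sq_nonneg _)) (le_of_eq hww)
    nlinarith [sq_nonneg (M κ / 2)]
  have hX2 : (∑ i ∈ F, c i * W i) ^ 2 ≤ (M κ / 2) ^ 2 := by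
    have hAnn : 0 ≤ ∑ i ∈ F, (c i / (M i / 2)) ^ 2 :=
      Finset.sum_nonneg fun i _ => sq_nonneg _
    have hBnn : 0 ≤ ∑ i ∈ F, ((M i / 2) * W i) ^ 2 :=
      Finset.sum_nonneg fun i _ => sq_nonneg _
    nlinarith
  rw [key, hsumF]
  have hκpos : 0 < M κ / 2 := by have := hMpos κ; linarith
  nlinarith [abs_nonneg (∑ i ∈ F, c i * W i), sq_abs (∑ i ∈ F, c i * W i)]

lemma aux_slice (m : ℕ) (w : EuclideanSpace ℝ (Fin (m+1))) (hw : ‖w‖ = 1)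
    (A O : Set (EuclideanSpace ℝ (Fin (m+1)))) (hA : MeasurableSet A) (hO : MeasurableSet O)
    (hAO : A ⊆ O) (R : ℝ) (hObd : ∀ x ∈ O, ‖x‖ ≤ R)
    (f : EuclideanSpace ℝ (Fin (m+1)) → ℝ) (hf : Continuous f)
    (hf0 : ∀ x, 0 ≤ f x) (hf1 : ∀ x, f x ≤ 1)
    (τ δ : ℝ) (hδ : 0 < δ) (hslab : ∀ x ∈ A, |⟪x, w⟫ - τ| ≤ δ) :
    ∃ t₀ : ℝ,
      BddAbove (Set.range fun t : ℝ =>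
        ∫ x in O ∩ {x | ⟪x, w⟫ = t}, f x ∂μH[(m : ℝ)]) ∧
      0 ≤ ∫ x in O ∩ {x | ⟪x, w⟫ = t₀}, f x ∂μH[(m : ℝ)] ∧
      (∫⁻ x in A, ENNReal.ofReal (f x) ∂volume) ≤
        ENNReal.ofReal (4 * δ * ∫ x in O ∩ {x | ⟪x, w⟫ = t₀}, f x ∂μH[(m : ℝ)]) := by
  classical
  -- orthonormal basis with b 0 = w
  have hcard : Module.finrank ℝ (EuclideanSpace ℝ (Fin (m+1))) = Fintype.card (Fin (m+1)) := by
    simp [finrank_euclideanSpace_fin]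
  have hon : Orthonormal ℝ (({0} : Set (Fin (m+1))).restrict (fun _ => w)) := by
    constructor
    · intro i; exact hw
    · intro i j hij
      exact absurd (Subtype.ext (by
        have hi := i.2; have hj := j.2
        simp only [Set.mem_singleton_iff] at hi hj
        rw [hi, hj])) hij
  obtain ⟨b, hb⟩ := hon.exists_orthonormalBasis_extension_of_card_eq hcard
  have hb0 : b 0 = w := hb 0 rfl
  set Φ := b.repr with hΦ
  have hΦw : ∀ x, ⟪x, w⟫ = Φ x 0 := by
    intro x
    rw [b.repr_apply_apply, hb0, real_inner_comm]
  set eE := (MeasurableEquiv.toLp 2 (Fin (m+1) → ℝ)).symm with heE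
  set eP := MeasurableEquiv.piFinSuccAbove (fun _ : Fin (m+1) => ℝ) 0 with heP
  set Ψ : EuclideanSpace ℝ (Fin (m+1)) ≃ᵐ ℝ × (Fin m → ℝ) :=
    (Φ.toHomeomorph.toMeasurableEquiv.trans eE).trans eP with hΨdef
  have hΨ : MeasurePreserving Ψ volume volume := by
    have h1 : MeasurePreserving (⇑eP ∘ ⇑eE ∘ ⇑Φ) volume volume :=
      (volume_preserving_piFinSuccAbove (fun _ : Fin (m+1) => ℝ) 0).comp
        ((EuclideanSpace.volume_preserving_symm_measurableEquiv_toLp _).comp b.measurePreserving_repr)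
    exact h1
  set G : EuclideanSpace ℝ (Fin (m+1)) → (Fin m → ℝ) := fun x j => Φ x j.succ with hG
  have hΨx : ∀ x, Ψ x = (Φ x 0, G x) := by
    intro x
    show eP (eE (Φ x)) = _
    rw [heP]
    ext
    · rfl
    · simp [MeasurableEquiv.piFinSuccAbove_apply, hG]
      rfl
  set ι : ℝ → (Fin m → ℝ) → EuclideanSpace ℝ (Fin (m+1)) := fun t y => Ψ.symm (t, y) with hι
  have hΨι : ∀ t y, Ψ (ι t y) = (t, y) := fun t y => Ψ.apply_symm_apply _
  have hι1 : ∀ t y, ⟪ι t y, w⟫ = t := by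
    intro t y
    have := hΨι t y
    rw [hΨx] at this
    rw [hΦw]
    exact congrArg Prod.fst this
  have hι2 : ∀ t y, G (ι t y) = y := by
    intro t y
    have := hΨι t y
    rw [hΨx] at this
    exact congrArg Prod.snd this
  have hι3 : ∀ t x, ⟪x, w⟫ = t → ι t (G x) = x := by
    intro t x hx
    have : Ψ x = (t, G x) := by rw [hΨx, ← hΦw, hx]
    show Ψ.symm (t, G x) = x
    rw [← this, Ψ.symm_apply_apply]
  -- Lipschitz bounds
  have hcoord : ∀ (z : EuclideanSpace ℝ (Fin (m+1))) (i : Fin (m+1)), |z i| ≤ ‖z‖ := by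
    intro z i
    rw [EuclideanSpace.norm_eq, ← Real.sqrt_sq_eq_abs]
    apply Real.sqrt_le_sqrt
    have := Finset.single_le_sum (f := fun j => ‖z j‖ ^ 2) (fun j _ => sq_nonneg _)
      (Finset.mem_univ i)
    simpa using this
  have hGlip : LipschitzWith 1 G := by
    apply LipschitzWith.of_dist_le_mul
    intro x y
    rw [NNReal.coe_one, one_mul]
    rw [dist_pi_le_iff dist_nonneg]
    intro j
    have h1 : G x j - G y j = Φ (x - y) j.succ := by
      simp [hG, map_sub]
    rw [Real.dist_eq, h1]
    calc |Φ (x - y) j.succ| ≤ ‖Φ (x - y)‖ := hcoord _ _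
      _ = ‖x - y‖ := Φ.norm_map _
      _ = dist x y := (dist_eq_norm x y).symm
  have hιlip : ∀ t, LipschitzWith ((m : ℝ≥0) + 1) (ι t) := by
    intro t
    apply LipschitzWith.of_dist_le_mul
    intro y y'
    have h1 : ι t y - ι t y' = Φ.symm (eE.symm (eP.symm (t, y)) - eE.symm (eP.symm (t, y'))) := by
      show Ψ.symm (t, y) - Ψ.symm (t, y') = _
      rw [map_sub]
      rfl
    have hD : ∀ i : Fin (m+1), eE.symm (eP.symm (t, y)) i - eE.symm (eP.symm (t, y')) i
        = (Fin.cons t y : Fin (m+1) → ℝ) i - (Fin.cons t y' : Fin (m+1) → ℝ) i := by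
      intro i
      simp [heP, heE]
      try rfl
    have hkey : ∀ j : Fin m, |y j - y' j| ≤ dist y y' := by
      intro j
      simpa [Real.dist_eq] using dist_le_pi_dist y y' j
    rw [dist_eq_norm, h1, Φ.symm.norm_map, EuclideanSpace.norm_eq]
    have hS : (∑ i : Fin (m+1), ‖eE.symm (eP.symm (t, y)) i - eE.symm (eP.symm (t, y')) i‖ ^ 2)
        ≤ (((m : ℝ) + 1) * dist y y') ^ 2 := by
      have e0 : ∀ i : Fin (m+1), ‖eE.symm (eP.symm (t, y)) i - eE.symm (eP.symm (t, y')) i‖ ^ 2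
          = ((Fin.cons t y : Fin (m+1) → ℝ) i
            - (Fin.cons t y' : Fin (m+1) → ℝ) i) ^ 2 := by
        intro i
        rw [hD i]
        simp [Real.norm_eq_abs, sq_abs]
      rw [Finset.sum_congr rfl fun i _ => e0 i]
      rw [Fin.sum_univ_succ]
      have h00 : ((Fin.cons t y : Fin (m+1) → ℝ) 0
          - (Fin.cons t y' : Fin (m+1) → ℝ) 0) ^ 2 = 0 := by
        simp
      rw [h00, zero_add]
      have hterm : ∀ j : Fin m, ((Fin.cons t y : Fin (m+1) → ℝ) j.succ
          - (Fin.cons t y' : Fin (m+1) → ℝ) j.succ) ^ 2 ≤ (dist y y') ^ 2 := by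
        intro j
        rw [Fin.cons_succ, Fin.cons_succ]
        have := hkey j
        nlinarith [abs_nonneg (y j - y' j), sq_abs (y j - y' j), dist_nonneg (x := y) (y := y')]
      refine le_trans (Finset.sum_le_sum fun j _ => hterm j) ?_
      rw [Finset.sum_const, Finset.card_univ, Fintype.card_fin, nsmul_eq_mul]
      have hd := dist_nonneg (x := y) (y := y')
      have : (m : ℝ) ≥ 0 := by positivity
      nlinarith
    refine le_trans (Real.sqrt_le_sqrt hS) ?_
    rw [Real.sqrt_sq (by positivity)]
    apply le_of_eq
    push_cast
    ring
  -- Hausdorff measure on pi space equals volume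
  have hPiH : (μH[(m : ℝ)] : Measure (Fin m → ℝ)) = volume := by
    have h := MeasureTheory.hausdorffMeasure_pi_real (ι := Fin m)
    simpa using h
  have hιmeas : ∀ t, Measurable (ι t) := fun t =>
    Ψ.symm.measurable.comp (measurable_const.prodMk measurable_id)
  -- pushforward of Lebesgue under ι t is dominated by Hausdorff measure
  have hmap_le : ∀ t : ℝ, Measure.map (ι t) volume ≤ μH[(m : ℝ)] := by
    intro t
    rw [Measure.le_iff]
    intro S hS
    rw [Measure.map_apply (hιmeas t) hS]
    have h1 : volume ((ι t) ⁻¹' S) = μH[(m : ℝ)] ((ι t) ⁻¹' S) := by rw [hPiH]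
    have h2 : (ι t) ⁻¹' S = G '' ((ι t) '' ((ι t) ⁻¹' S)) := by
      rw [Set.image_image]
      have h3 : ∀ y, G (ι t y) = y := hι2 t
      simp only [h3, Set.image_id']
    have h4 := hGlip.hausdorffMeasure_image_le (show (0:ℝ) ≤ (m:ℝ) by positivity)
      ((ι t) '' ((ι t) ⁻¹' S))
    rw [h1, h2]
    refine le_trans (by simpa using h4) ?_
    exact measure_mono (Set.image_preimage_subset (ι t) S)
  -- hyperplanes
  set Ht : ℝ → Set (EuclideanSpace ℝ (Fin (m+1))) := fun t => {x | ⟪x, w⟫ = t} with hHtdef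
  have hinnerw : Continuous fun x : EuclideanSpace ℝ (Fin (m+1)) => ⟪x, w⟫ :=
    Continuous.inner continuous_id continuous_const
  have hHtm : ∀ t, MeasurableSet (Ht t) := fun t =>
    hinnerw.measurable (measurableSet_singleton t)
  have hHtrange : ∀ t, Ht t ⊆ Set.range (ι t) := by
    intro t x hx
    exact ⟨G x, hι3 t x hx⟩
  -- uniform upper bound for Hausdorff measure of bounded slices
  set box : Set (Fin m → ℝ) := Set.pi Set.univ (fun _ => Set.Icc (-R) R) with hbox
  set Cbox : ℝ≥0∞ := ((m : ℝ≥0) + 1 : ℝ≥0∞) ^ (m : ℝ) * volume box with hCbox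
  have hCbox_ne : Cbox ≠ ∞ := by
    apply ENNReal.mul_ne_top
    · refine (ENNReal.rpow_lt_top_of_nonneg (by positivity) ?_).ne
      exact ENNReal.coe_ne_top
    · rw [hbox, volume_pi_pi]
      refine (ENNReal.prod_lt_top (fun i _ => ?_)).ne
      rw [Real.volume_Icc]
      exact ENNReal.ofReal_lt_top
  have hHle : ∀ t : ℝ, μH[(m : ℝ)] (O ∩ Ht t) ≤ Cbox := by
    intro t
    have hsub : O ∩ Ht t ⊆ Set.range (ι t) := fun x hx => hHtrange t hx.2
    have heq : O ∩ Ht t = (ι t) '' ((ι t) ⁻¹' (O ∩ Ht t)) :=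
      (Set.image_preimage_eq_of_subset hsub).symm
    rw [heq]
    have h4 := (hιlip t).hausdorffMeasure_image_le (show (0:ℝ) ≤ (m:ℝ) by positivity)
      ((ι t) ⁻¹' (O ∩ Ht t))
    refine le_trans h4 ?_
    rw [hCbox]
    apply mul_le_mul_right
    rw [hPiH]
    apply measure_mono
    intro y hy
    have hyO : ι t y ∈ O := hy.1
    have hnorm : ‖ι t y‖ ≤ R := hObd _ hyO
    intro j _
    have h5 : |y j| ≤ ‖ι t y‖ := by
      have h6 : y j = Φ (ι t y) j.succ := by
        have := hι2 t y
        rw [hG] at this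
        exact (congrFun this j).symm
      rw [h6, ← Φ.norm_map (ι t y)]
      exact hcoord _ _
    exact Set.mem_Icc.mpr (abs_le.mp (le_trans h5 hnorm))
  -- slice integrals
  set fE : ℝ → ℝ≥0∞ := fun t => ∫⁻ x in A ∩ Ht t, ENNReal.ofReal (f x) ∂μH[(m : ℝ)] with hfEdef
  set gE : ℝ → ℝ≥0∞ := fun t => ∫⁻ x in O ∩ Ht t, ENNReal.ofReal (f x) ∂μH[(m : ℝ)] with hgEdef
  set g : ℝ → ℝ := fun t => ∫ x in O ∩ Ht t, f x ∂μH[(m : ℝ)] with hgdef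
  have hfg : ∀ t, fE t ≤ gE t := by
    intro t
    exact lintegral_mono' (Measure.restrict_mono (Set.inter_subset_inter_left _ hAO) le_rfl) le_rfl
  have hgE_le : ∀ t, gE t ≤ Cbox := by
    intro t
    refine le_trans ?_ (hHle t)
    have h1 : ∀ x, ENNReal.ofReal (f x) ≤ 1 := fun x => ENNReal.ofReal_le_one.mpr (hf1 x)
    calc gE t ≤ ∫⁻ _ in O ∩ Ht t, 1 ∂μH[(m : ℝ)] := lintegral_mono fun x => h1 x
      _ = μH[(m : ℝ)] (O ∩ Ht t) := setLIntegral_one _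
  have hgE_ne : ∀ t, gE t ≠ ∞ := fun t => (lt_of_le_of_lt (hgE_le t) hCbox_ne.lt_top).ne
  have hg_eq : ∀ t, g t = (gE t).toReal := by
    intro t
    rw [hgdef]
    exact integral_eq_lintegral_of_nonneg_ae (Filter.Eventually.of_forall fun x => hf0 x)
      hf.aestronglyMeasurable
  have hg_nonneg : ∀ t, 0 ≤ g t := fun t => (hg_eq t) ▸ ENNReal.toReal_nonneg
  have hbdd : BddAbove (Set.range g) := by
    refine ⟨Cbox.toReal, ?_⟩
    rintro x ⟨t, rfl⟩
    rw [hg_eq t]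
    exact ENNReal.toReal_mono hCbox_ne (hgE_le t)
  -- Fubini
  set F : EuclideanSpace ℝ (Fin (m+1)) → ℝ≥0∞ :=
    Set.indicator A (fun x => ENNReal.ofReal (f x)) with hFdef
  have hFmeas : Measurable F :=
    (ENNReal.measurable_ofReal.comp hf.measurable).indicator hA
  set V : ℝ≥0∞ := ∫⁻ x in A, ENNReal.ofReal (f x) ∂volume with hVdef
  have hV1 : V = ∫⁻ x, F x ∂volume := (lintegral_indicator hA _).symm
  have hV2 : (∫⁻ x, F x ∂volume) = ∫⁻ z, F (Ψ.symm z) ∂(volume : Measure (ℝ × (Fin m → ℝ))) :=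
    ((MeasurePreserving.symm Ψ hΨ).lintegral_comp hFmeas).symm
  have hV3 : (∫⁻ z, F (Ψ.symm z) ∂(volume : Measure (ℝ × (Fin m → ℝ))))
      = ∫⁻ t : ℝ, ∫⁻ y, F (Ψ.symm (t, y)) ∂volume ∂volume := by
    rw [show (volume : Measure (ℝ × (Fin m → ℝ))) = (volume : Measure ℝ).prod volume from rfl]
    exact lintegral_prod _ (hFmeas.comp Ψ.symm.measurable).aemeasurable
  have hinnerle : ∀ t, (∫⁻ y, F (Ψ.symm (t, y)) ∂volume) ≤ fE t := by
    intro t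
    set Ft : EuclideanSpace ℝ (Fin (m+1)) → ℝ≥0∞ :=
      Set.indicator (A ∩ Ht t) (fun x => ENNReal.ofReal (f x)) with hFtdef
    have hFtmeas : Measurable Ft :=
      (ENNReal.measurable_ofReal.comp hf.measurable).indicator (hA.inter (hHtm t))
    have heq : ∀ y, F (Ψ.symm (t, y)) = Ft (ι t y) := by
      intro y
      have hmem : ι t y ∈ Ht t := hι1 t y
      show F (ι t y) = Ft (ι t y)
      by_cases hy : ι t y ∈ A
      · have hy2 : ι t y ∈ A ∩ Ht t := Set.mem_inter hy hmem
        rw [hFdef, hFtdef, Set.indicator_of_mem hy, Set.indicator_of_mem hy2]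
      · have hy2 : ι t y ∉ A ∩ Ht t := fun hc => hy hc.1
        rw [hFdef, hFtdef, Set.indicator_of_notMem hy, Set.indicator_of_notMem hy2]
    calc (∫⁻ y, F (Ψ.symm (t, y)) ∂volume) = ∫⁻ y, Ft (ι t y) ∂volume :=
          lintegral_congr heq
      _ = ∫⁻ x, Ft x ∂(Measure.map (ι t) volume) := (lintegral_map hFtmeas (hιmeas t)).symm
      _ ≤ ∫⁻ x, Ft x ∂μH[(m : ℝ)] := lintegral_mono' (hmap_le t) le_rfl
      _ = fE t := by rw [hFtdef, lintegral_indicator (hA.inter (hHtm t))]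
  set I : Set ℝ := Set.Icc (τ - δ) (τ + δ) with hIdef
  have hfE0 : ∀ t ∉ I, fE t = 0 := by
    intro t ht
    have hempty : A ∩ Ht t = ∅ := by
      ext x
      simp only [Set.mem_inter_iff, Set.mem_empty_iff_false, iff_false, not_and]
      intro hxA hxt
      apply ht
      have := hslab x hxA
      have hxw : ⟪x, w⟫ = t := hxt
      rw [hIdef]
      constructor
      · rw [← hxw]; cases abs_le.mp this; linarith
      · rw [← hxw]; cases abs_le.mp this; linarith
    rw [hfEdef]
    simp only [hempty, Measure.restrict_empty, lintegral_zero_measure]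
  have hVle : V ≤ ∫⁻ t in I, fE t ∂volume := by
    have hsplit : (∫⁻ t, fE t ∂volume) = (∫⁻ t in I, fE t ∂volume) + ∫⁻ t in Iᶜ, fE t ∂volume :=
      (lintegral_add_compl _ measurableSet_Icc).symm
    have hz : (∫⁻ t in Iᶜ, fE t ∂volume) = 0 := by
      have : (∫⁻ t in Iᶜ, fE t ∂volume) = ∫⁻ t in Iᶜ, 0 ∂volume := by
        apply setLIntegral_congr_fun measurableSet_Icc.compl
        exact fun t ht => hfE0 t ht
      rw [this, lintegral_zero]
    calc V = ∫⁻ t : ℝ, ∫⁻ y, F (Ψ.symm (t, y)) ∂volume ∂volume := by rw [hV1, hV2, hV3]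
      _ ≤ ∫⁻ t, fE t ∂volume := lintegral_mono fun t => hinnerle t
      _ = ∫⁻ t in I, fE t ∂volume := by rw [hsplit, hz, add_zero]
  -- pigeonhole
  by_cases hVz : V = 0
  · refine ⟨τ, hbdd, hg_nonneg τ, ?_⟩
    show V ≤ ENNReal.ofReal (4 * δ * g τ)
    rw [hVz]
    exact zero_le
  · have hVfin : V ≠ ∞ := by
      have h1 : V ≤ volume (Metric.closedBall (0 : EuclideanSpace ℝ (Fin (m+1))) R) := by
        calc V ≤ ∫⁻ _ in A, 1 ∂volume :=
              lintegral_mono fun x => ENNReal.ofReal_le_one.mpr (hf1 x)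
          _ = volume A := setLIntegral_one _
          _ ≤ volume (Metric.closedBall 0 R) := measure_mono fun x hx =>
              Metric.mem_closedBall.mpr (by simpa [dist_eq_norm] using hObd x (hAO hx))
      exact (lt_of_le_of_lt h1 (MeasureTheory.measure_closedBall_lt_top
        (x := (0 : EuclideanSpace ℝ (Fin (m+1)))) (r := R))).ne
    set a : ℝ≥0∞ := ENNReal.ofReal (2 * δ) with hadef
    have ha0 : a ≠ 0 := by
      rw [hadef]
      simp only [ne_eq, ENNReal.ofReal_eq_zero, not_le]
      linarith
    have hane : a ≠ ∞ := ENNReal.ofReal_ne_top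
    have hex : ∃ t₀ : ℝ, V ≤ 2 * a * fE t₀ := by
      by_contra hcon
      push_neg at hcon
      have hle : ∀ t, fE t ≤ V / (2 * a) := by
        intro t
        rw [ENNReal.le_div_iff_mul_le (Or.inl (by simp [ha0])) (Or.inl (by
          simp [hane, ENNReal.mul_ne_top]))]
        rw [mul_comm]
        exact (hcon t).le
      have hIvol : volume I = a := by
        rw [hIdef, Real.volume_Icc, hadef]
        congr 1
        ring
      have h2 : (∫⁻ t in I, fE t ∂volume) ≤ V / (2 * a) * a := by
        calc (∫⁻ t in I, fE t ∂volume) ≤ ∫⁻ _ in I, V / (2 * a) ∂volume :=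
              lintegral_mono fun t => hle t
          _ = V / (2 * a) * volume I := setLIntegral_const _ _
          _ = V / (2 * a) * a := by rw [hIvol]
      have h3 : V / (2 * a) * a = V / 2 := by
        rw [ENNReal.div_eq_inv_mul, ENNReal.mul_inv (Or.inr hane) (Or.inr ha0)]
        calc (2 : ℝ≥0∞)⁻¹ * a⁻¹ * V * a = (2 : ℝ≥0∞)⁻¹ * V * (a⁻¹ * a) := by ring
          _ = (2 : ℝ≥0∞)⁻¹ * V := by rw [ENNReal.inv_mul_cancel ha0 hane, mul_one]
          _ = V / 2 := by rw [ENNReal.div_eq_inv_mul]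
      have h4 : V ≤ V / 2 := le_trans hVle (h3 ▸ h2)
      have h5 : V / 2 < V := ENNReal.half_lt_self hVz hVfin
      exact absurd (lt_of_le_of_lt h4 h5) (lt_irrefl V)
    obtain ⟨t₀, ht₀⟩ := hex
    refine ⟨t₀, hbdd, hg_nonneg t₀, ?_⟩
    have h6 : ENNReal.ofReal (g t₀) = gE t₀ := by
      rw [hg_eq t₀]
      exact ENNReal.ofReal_toReal (hgE_ne t₀)
    have h7 : ENNReal.ofReal (4 * δ * g t₀) = 2 * a * gE t₀ := by
      rw [show (4 : ℝ) * δ * g t₀ = (2 * (2 * δ)) * g t₀ by ring]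
      rw [ENNReal.ofReal_mul (by linarith), ENNReal.ofReal_mul (by norm_num), h6, hadef]
      norm_num
    show V ≤ ENNReal.ofReal (4 * δ * g t₀)
    rw [h7]
    exact le_trans ht₀ (mul_le_mul_right (hfg t₀) _)

lemma aux_onbf_ (n : ℕ) (hn : 0 < n) (v : Fin n → EuclideanSpace ℝ (Fin n))
    (hv : Orthonormal ℝ v) :
    ∃ b : OrthonormalBasis (Fin n) ℝ (EuclideanSpace ℝ (Fin n)), ∀ i, b i = v i := by
  haveI : Nonempty (Fin n) := ⟨⟨0, hn⟩⟩
  have hcard : Fintype.card (Fin n) = Module.finrank ℝ (EuclideanSpace ℝ (Fin n)) := by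
    simp [finrank_euclideanSpace_fin]
  have hsp : ⊤ ≤ Submodule.span ℝ (Set.range v) :=
    (hv.linearIndependent.span_eq_top_of_card_eq_finrank hcard).ge
  exact ⟨OrthonormalBasis.mk hv hsp, fun i => by simp [OrthonormalBasis.coe_mk]⟩

lemma aux_box_vol (n : ℕ) (hn : 0 < n) (v : Fin n → EuclideanSpace ℝ (Fin n))
    (hv : Orthonormal ℝ v) (M : Fin n → ℝ) (hMpos : ∀ i, 0 < M i)
    (y₀ : EuclideanSpace ℝ (Fin n)) :
    ENNReal.ofReal (∏ i, M i / n) ≤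
      volume {x : EuclideanSpace ℝ (Fin n) | ∑ i, (⟪x - y₀, v i⟫ / (M i / 2)) ^ 2 ≤ 1} := by
  classical
  obtain ⟨b, hb⟩ := aux_onbf_ n hn v hv
  set φ : EuclideanSpace ℝ (Fin n) → (Fin n → ℝ) :=
    (⇑(MeasurableEquiv.toLp 2 (Fin n → ℝ)).symm) ∘ ⇑b.repr with hφdef
  have hφ : MeasurePreserving φ volume volume :=
    (EuclideanSpace.volume_preserving_symm_measurableEquiv_toLp _).comp b.measurePreserving_repr
  set r : Fin n → ℝ := fun i => M i / (2 * n) with hrdef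
  set z : Fin n → ℝ := fun i => b.repr y₀ i with hzdef
  set Bpi : Set (Fin n → ℝ) := Set.univ.pi fun i => Set.Icc (z i - r i) (z i + r i) with hBdef
  have hsub : φ ⁻¹' Bpi ⊆
      {x : EuclideanSpace ℝ (Fin n) | ∑ i, (⟪x - y₀, v i⟫ / (M i / 2)) ^ 2 ≤ 1} := by
    intro x hx
    have hc : ∀ i, |⟪x - y₀, v i⟫| ≤ r i := by
      intro i
      have h1 : φ x i ∈ Set.Icc (z i - r i) (z i + r i) := hx i (Set.mem_univ i)
      have h2 : φ x i = b.repr x i := rfl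
      have h3 : ⟪x - y₀, v i⟫ = b.repr x i - z i := by
        calc ⟪x - y₀, v i⟫ = ⟪b i, x - y₀⟫ := by rw [hb i, real_inner_comm]
          _ = b.repr (x - y₀) i := (b.repr_apply_apply (x - y₀) i).symm
          _ = b.repr x i - z i := by rw [map_sub]; rfl
      rw [h3]
      rw [h2] at h1
      rcases h1 with ⟨h4, h5⟩
      rw [abs_le]
      constructor <;> linarith
    show ∑ i, (⟪x - y₀, v i⟫ / (M i / 2)) ^ 2 ≤ 1
    have hterm : ∀ i : Fin n, (⟪x - y₀, v i⟫ / (M i / 2)) ^ 2 ≤ (1 / n) ^ 2 := by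
      intro i
      have h1 := hMpos i
      have h2 := hc i
      rw [hrdef] at h2
      have hnn : (0:ℝ) < n := by exact_mod_cast hn
      have h7 : |⟪x - y₀, v i⟫| * (2 * n) ≤ M i := by
        rw [← le_div_iff₀ (by positivity)]
        exact h2
      have e1 : (⟪x - y₀, v i⟫ / (M i / 2)) ^ 2 = ⟪x - y₀, v i⟫ ^ 2 / (M i / 2) ^ 2 :=
        div_pow _ _ _
      have e2 : ((1:ℝ) / n) ^ 2 = 1 / (n:ℝ) ^ 2 := by rw [div_pow, one_pow]
      rw [e1, e2, div_le_div_iff₀ (by positivity) (by positivity)]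
      nlinarith [mul_self_le_mul_self (by positivity : (0:ℝ) ≤ |⟪x - y₀, v i⟫| * (2 * n)) h7,
        sq_abs ⟪x - y₀, v i⟫, abs_nonneg ⟪x - y₀, v i⟫, (hMpos i).le]
    refine le_trans (Finset.sum_le_sum fun i _ => hterm i) ?_
    rw [Finset.sum_const, Finset.card_univ, Fintype.card_fin, nsmul_eq_mul]
    have hnn : (0:ℝ) < n := by exact_mod_cast hn
    rw [div_pow, one_pow, mul_one_div, div_le_one (by positivity)]
    have h8 : (1:ℝ) ≤ n := by exact_mod_cast hn
    nlinarith
  refine le_trans ?_ (measure_mono hsub)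
  have hmeas : MeasurableSet Bpi := MeasurableSet.univ_pi fun i => measurableSet_Icc
  rw [hφ.measure_preimage hmeas.nullMeasurableSet]
  rw [hBdef, volume_pi_pi]
  have hIcc : ∀ i : Fin n, volume (Set.Icc (z i - r i) (z i + r i)) =
      ENNReal.ofReal (M i / n) := by
    intro i
    rw [Real.volume_Icc]
    congr 1
    rw [hrdef]
    have hnn : (0:ℝ) < n := by exact_mod_cast hn
    field_simp
    ring
  rw [Finset.prod_congr rfl fun i _ => hIcc i]
  have hnn : (0:ℝ) < n := by exact_mod_cast hn
  rw [← ENNReal.ofReal_prod_of_nonneg fun i _ => (div_pos (hMpos i) hnn).le]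


/-- For each `1 ≤ k ≤ n-1` there is a unit direction `w` in the span of the
first `k` coordinate vectors such that some hyperplane section orthogonal to `w` carries
`L²`-mass at least `c₃ ∏_{j ≠ k} M_j`, where `M₁ ≥ ⋯ ≥ M_n` are the axis lengths of a John
ellipsoid of the superlevel set `Ω_{1/2}`. -/
theorem slice_mass_lower_bound (n : ℕ) (hn : 2 ≤ n) :
    ∃ c₃ : ℝ, 0 < c₃ ∧
      ∀ (Ω : Set (EuclideanSpace ℝ (Fin n))) (u : EuclideanSpace ℝ (Fin n) → ℝ)
        (y₀ : EuclideanSpace ℝ (Fin n)) (v : Fin n → EuclideanSpace ℝ (Fin n)) (M : Fin n → ℝ),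
        IsOpen Ω → Bornology.IsBounded Ω → Convex ℝ Ω →
        IsFirstEigenfunction n Ω u →
        IsGreatest (u '' Ω) 1 →
        IsJohnEllipsoid n {x | x ∈ Ω ∧ 1 / 2 < u x} y₀ v M →
        (∀ i j : Fin n, i ≤ j → M j ≤ M i) →
        ∀ k : ℕ, (hk1 : 1 ≤ k) → (hkn : k ≤ n - 1) →
          ∃ w : EuclideanSpace ℝ (Fin n),
            w ∈ Submodule.span ℝ
              ((fun i : Fin n => EuclideanSpace.single i (1 : ℝ)) '' {i | (i : ℕ) < k}) ∧
            ‖w‖ = 1 ∧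
            (⨆ t : ℝ, ∫ x in Ω ∩ {x | ⟪x, w⟫ = t}, (u x) ^ 2 ∂μH[(n : ℝ) - 1]) ≥
              c₃ * ∏ j ∈ Finset.univ.erase (⟨k - 1, by omega⟩ : Fin n), M j := by
  obtain ⟨m, rfl⟩ : ∃ m, n = m + 1 := ⟨n - 1, by omega⟩
  have hm : 1 ≤ m := by omega
  refine ⟨1 / (8 * (m + 1 : ℝ) ^ (m + 1)), by positivity, ?_⟩
  intro Ω u y₀ v M hΩopen hΩbd hΩconv hu hmax hJohn hM k hk1 hkn
  obtain ⟨hucont, huzero, -, hupos, -⟩ := hu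
  obtain ⟨hvon, hMpos, hEQ, hQE⟩ := hJohn
  -- bounds on u
  have hu0 : ∀ x, 0 ≤ u x := by
    intro x
    by_cases hx : x ∈ Ω
    · exact (hupos x hx).le
    · rw [huzero x hx]
  have hu1 : ∀ x, u x ≤ 1 := by
    intro x
    by_cases hx : x ∈ Ω
    · exact hmax.2 ⟨x, hx, rfl⟩
    · rw [huzero x hx]; norm_num
  -- the direction w
  have hkn' : k + 1 ≤ m + 1 := by omega
  obtain ⟨w, hwspan, hwnorm, hworth⟩ := aux_exists_w (m + 1) k hk1 hkn' v hvon
  refine ⟨w, hwspan, hwnorm, ?_⟩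
  set κ : Fin (m + 1) := ⟨k - 1, by omega⟩ with hκdef
  -- measure index rewrite
  have hidx : ((m + 1 : ℕ) : ℝ) - 1 = (m : ℝ) := by push_cast; ring
  rw [hidx]
  -- boundedness
  obtain ⟨R, hR⟩ := hΩbd.subset_closedBall 0
  have hObd : ∀ x ∈ Ω, ‖x‖ ≤ R := by
    intro x hx
    have := hR hx
    rwa [Metric.mem_closedBall, dist_zero_right] at this
  -- the ellipsoid E
  set Eset : Set (EuclideanSpace ℝ (Fin (m + 1))) := ellipsoid (m + 1) y₀ v M with hEdef
  have hEΩ : Eset ⊆ Ω := fun x hx => (hEQ hx).1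
  have hEhalf : ∀ x ∈ Eset, 1 / 2 < u x := fun x hx => (hEQ hx).2
  have hEmeas : MeasurableSet Eset := by
    have hcont : Continuous fun x : EuclideanSpace ℝ (Fin (m + 1)) =>
        ∑ i : Fin (m + 1), (⟪x - y₀, v i⟫ / (M i / 2)) ^ 2 := by
      apply continuous_finset_sum
      intro i _
      exact (((continuous_id.sub continuous_const).inner continuous_const).div_const _).pow 2
    exact (isClosed_le hcont continuous_const).measurableSet
  have hΩmeas : MeasurableSet Ω := hΩopen.measurableSet
  -- slab containment
  have hslab : ∀ x ∈ Eset, |⟪x, w⟫ - ⟪y₀, w⟫| ≤ M κ / 2 := by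
    intro x hx
    exact aux_slab (m + 1) k hk1 hkn' v hvon M hMpos hM w y₀ x hwnorm hworth hx
  -- apply the slice lemma
  have hf : Continuous fun x : EuclideanSpace ℝ (Fin (m + 1)) => u x ^ 2 := hucont.pow 2
  have hf0 : ∀ x, 0 ≤ u x ^ 2 := fun x => sq_nonneg _
  have hf1 : ∀ x, u x ^ 2 ≤ 1 := by
    intro x
    nlinarith [hu0 x, hu1 x]
  have hδ : 0 < M κ / 2 := by have := hMpos κ; linarith
  obtain ⟨t₀, hbdd, hgnn, hineq⟩ := aux_slice m w hwnorm Eset Ω hEmeas hΩmeas hEΩ R hObd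
    (fun x => u x ^ 2) hf hf0 hf1 ⟪y₀, w⟫ (M κ / 2) hδ hslab
  -- lower bound for V
  have hV : ENNReal.ofReal ((1 / 4) * ∏ i, M i / (m + 1 : ℝ)) ≤
      ∫⁻ x in Eset, ENNReal.ofReal (u x ^ 2) ∂volume := by
    have h1 : ENNReal.ofReal ((1 / 4 : ℝ)) * ENNReal.ofReal (∏ i, M i / (m + 1 : ℝ)) ≤
        ENNReal.ofReal (1 / 4 : ℝ) * volume Eset := by
      apply mul_le_mul_right
      have := aux_box_vol (m + 1) (by omega) v hvon M hMpos y₀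
      push_cast at this ⊢
      exact this
    have h2 : ENNReal.ofReal (1 / 4 : ℝ) * volume Eset ≤
        ∫⁻ x in Eset, ENNReal.ofReal (u x ^ 2) ∂volume := by
      rw [← setLIntegral_const Eset (ENNReal.ofReal (1 / 4 : ℝ))]
      apply lintegral_mono_ae
      rw [ae_restrict_iff' hEmeas]
      apply Filter.Eventually.of_forall
      intro x hx
      apply ENNReal.ofReal_le_ofReal
      have := hEhalf x hx
      nlinarith
    calc ENNReal.ofReal ((1 / 4) * ∏ i, M i / (m + 1 : ℝ))
        = ENNReal.ofReal ((1 / 4 : ℝ)) * ENNReal.ofReal (∏ i, M i / (m + 1 : ℝ)) := by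
          rw [← ENNReal.ofReal_mul (by norm_num)]
      _ ≤ ENNReal.ofReal (1 / 4 : ℝ) * volume Eset := h1
      _ ≤ _ := h2
  -- combine
  set gt₀ : ℝ := ∫ x in Ω ∩ {x | ⟪x, w⟫ = t₀}, u x ^ 2 ∂μH[(m : ℝ)] with hgt₀def
  have hcomb : (1 / 4) * ∏ i, M i / (m + 1 : ℝ) ≤ 4 * (M κ / 2) * gt₀ := by
    have h3 := le_trans hV hineq
    rw [ENNReal.ofReal_le_ofReal_iff (by positivity)] at h3
    exact h3
  -- final arithmetic
  have hprod : (∏ j ∈ Finset.univ.erase κ, M j) * M κ = ∏ j, M j :=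
    Finset.prod_erase_mul Finset.univ M (Finset.mem_univ κ)
  have hproddiv : ∏ i, M i / (m + 1 : ℝ) = (∏ i, M i) / (m + 1 : ℝ) ^ (m + 1) := by
    rw [Finset.prod_div_distrib, Finset.prod_const, Finset.card_univ, Fintype.card_fin]
  have hMκ := hMpos κ
  have hfinal : 1 / (8 * (m + 1 : ℝ) ^ (m + 1)) * ∏ j ∈ Finset.univ.erase κ, M j ≤ gt₀ := by
    rw [hproddiv, ← hprod] at hcomb
    have hpow : (0:ℝ) < (m + 1 : ℝ) ^ (m + 1) := by positivity
    have h9 : (∏ j ∈ Finset.univ.erase κ, M j) * M κ / (m + 1 : ℝ) ^ (m + 1)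
        ≤ 8 * M κ * gt₀ := by linarith
    rw [div_le_iff₀ hpow] at h9
    rw [div_mul_eq_mul_div, one_mul, div_le_iff₀ (by positivity)]
    nlinarith [h9, hMκ]
  refine le_trans hfinal ?_
  exact le_ciSup hbdd t₀
end

section
/- Let h : [a, b] → ℝ be a concave function with 0 ≤ h ≤ 1 on [a, b], attaining the maximum value 1 at some point of [a, b], and let N₁ = b − a ≥ 1. Then there exists an absolute constant c > 0 (one may take c = 2^{−1/3}) and an interval I ⊆ [a, b] of some length L with L ≥ c·N₁^{1/3}, such that h(x) ≥ 1 − L^{−2} for all x ∈ I. -/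
/-!
Let `x₀` be a point where `h = 1` and let `q` be the endpoint of `[a, b]` farther from `x₀`, so
`|q - x₀| ≥ N₁ / 2`. Since `h ≥ 0`, concavity puts `h` above the chord from `(x₀, 1)` to `(q, 0)`,
so `h ≥ 1 - L / (N₁ / 2)` on the length-`L` interval starting at `x₀` towards `q`. The choice
`L³ = N₁ / 2` makes this bound exactly `1 - L⁻²`. When `N₁ ≤ 2` we have `L ≤ 1` and the bound is
nonpositive, so any subinterval of length `L` will do.
-/

open Set

theorem ConcaveOn.one_sub_le_of_eq_one {E : Type*} [AddCommMonoid E] [Module ℝ E] {s : Set E}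
    {f : E → ℝ} (hf : ConcaveOn ℝ s f) {x y : E} (hx : x ∈ s) (hy : y ∈ s) (hfx : f x = 1)
    (hfy : 0 ≤ f y) {t : ℝ} (ht₀ : 0 ≤ t) (ht₁ : t ≤ 1) :
    1 - t ≤ f ((1 - t) • x + t • y) :=
  calc 1 - t ≤ (1 - t) • f x + t • f y := by
        rw [hfx, smul_eq_mul, smul_eq_mul, mul_one]
        nlinarith
    _ ≤ f ((1 - t) • x + t • y) := hf.2 hx hy (by linarith) ht₀ (by ring)

theorem ConcaveOn.one_sub_abs_div_le_of_mem_uIcc {s : Set ℝ} {f : ℝ → ℝ} (hf : ConcaveOn ℝ s f)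
    {x₀ q x : ℝ} (hx₀ : x₀ ∈ s) (hq : q ∈ s) (hfx₀ : f x₀ = 1) (hfq : 0 ≤ f q)
    (hx : x ∈ uIcc x₀ q) : 1 - |x - x₀| / |q - x₀| ≤ f x := by
  rcases eq_or_ne q x₀ with rfl | hqx₀
  · rw [uIcc_self, mem_singleton_iff] at hx
    simp [hx, hfx₀]
  have hd : q - x₀ ≠ 0 := sub_ne_zero.2 hqx₀
  set t := (x - x₀) / (q - x₀) with ht
  have ht_abs : |x - x₀| / |q - x₀| = t := by
    rw [← abs_div, abs_of_nonneg]
    rcases mem_uIcc.1 hx with ⟨h₁, h₂⟩ | ⟨h₁, h₂⟩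
    · exact div_nonneg (by linarith) (by linarith)
    · exact div_nonneg_of_nonpos (by linarith) (by linarith)
  have ht₁ : t ≤ 1 := by
    rw [← ht_abs]
    exact div_le_one_of_le₀ (abs_sub_left_of_mem_uIcc hx) (abs_nonneg _)
  have hcomb : (1 - t) • x₀ + t • q = x := by
    rw [smul_eq_mul, smul_eq_mul, ht]
    field_simp
    ring
  rw [ht_abs, ← hcomb]
  exact hf.one_sub_le_of_eq_one hx₀ hq hfx₀ hfq
    (ht_abs ▸ div_nonneg (abs_nonneg _) (abs_nonneg _)) ht₁

theorem exists_Icc_subset_uIcc_far_endpoint {a b x₀ L : ℝ} (hx₀ : x₀ ∈ Icc a b) (hL₀ : 0 ≤ L)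
    (hL : L ≤ (b - a) / 2) :
    ∃ q ∈ Icc a b, ∃ s, (b - a) / 2 ≤ |q - x₀| ∧ Icc s (s + L) ⊆ uIcc x₀ q ∧
      ∀ x ∈ Icc s (s + L), |x - x₀| ≤ L := by
  obtain ⟨ha, hb⟩ := hx₀
  rcases le_total ((b - a) / 2) (b - x₀) with hfar | hfar
  · refine ⟨b, ⟨by linarith, le_rfl⟩, x₀, by rwa [abs_of_nonneg (by linarith)], ?_, ?_⟩
    · rw [uIcc_of_le hb]
      exact Icc_subset_Icc le_rfl (by linarith)
    · exact fun x hx => abs_sub_le_iff.2 ⟨by linarith [hx.2], by linarith [hx.1]⟩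
  · refine ⟨a, ⟨le_rfl, by linarith⟩, x₀ - L, ?_, ?_, ?_⟩
    · rw [abs_of_nonpos (by linarith)]
      linarith
    · rw [uIcc_of_ge ha]
      exact Icc_subset_Icc (by linarith) (by linarith)
    · exact fun x hx => abs_sub_le_iff.2 ⟨by linarith [hx.2], by linarith [hx.1]⟩

theorem rpow_neg_third_two_mul_rpow_third_pow_three {N : ℝ} (hN : 0 ≤ N) :
    ((2 : ℝ) ^ (-(1 : ℝ) / 3) * N ^ ((1 : ℝ) / 3)) ^ 3 = N / 2 := by
  rw [mul_pow, ← Real.rpow_natCast, ← Real.rpow_natCast, ← Real.rpow_mul (by norm_num),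
    ← Real.rpow_mul hN]
  norm_num [Real.rpow_neg_one]
  ring

/-- A concave function `h : [a,b] → [0,1]` attaining the value `1`, on an
interval of length `b - a ≥ 1`, satisfies `h ≥ 1 - L⁻²` on some subinterval of length
`L ≥ 2^{-1/3} (b-a)^{1/3}`. -/
theorem concave_flat_interval (a b : ℝ) (h : ℝ → ℝ) (hab : 1 ≤ b - a)
    (hconc : ConcaveOn ℝ (Set.Icc a b) h)
    (hrange : ∀ x ∈ Set.Icc a b, 0 ≤ h x ∧ h x ≤ 1)
    (hmax : ∃ x ∈ Set.Icc a b, h x = 1) :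
    ∃ L s : ℝ, (2 : ℝ) ^ (-(1 : ℝ) / 3) * (b - a) ^ ((1 : ℝ) / 3) ≤ L ∧
      Set.Icc s (s + L) ⊆ Set.Icc a b ∧
      ∀ x ∈ Set.Icc s (s + L), 1 - 1 / L ^ 2 ≤ h x := by
  set L := (2 : ℝ) ^ (-(1 : ℝ) / 3) * (b - a) ^ ((1 : ℝ) / 3)
  have hL₀ : 0 < L := by positivity
  have hL₃ : L ^ 3 = (b - a) / 2 := rpow_neg_third_two_mul_rpow_third_pow_three (by linarith)
  rcases le_total (b - a) 2 with hsmall | hlarge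
  · have hL₁ : L ≤ 1 := (pow_le_one_iff_of_nonneg hL₀.le three_ne_zero).1 (by linarith)
    refine ⟨L, a, le_rfl, Icc_subset_Icc le_rfl (by linarith), fun x hx => ?_⟩
    have hbound : 1 - 1 / L ^ 2 ≤ 0 := by
      rw [sub_nonpos, le_div_iff₀ (by positivity), one_mul]
      exact pow_le_one₀ hL₀.le hL₁
    exact hbound.trans (hrange x (Icc_subset_Icc le_rfl (by linarith) hx)).1
  have hL₁ : 1 ≤ L := (one_le_pow_iff_of_nonneg hL₀.le three_ne_zero).1 (by linarith)
  have hL_le : L ≤ (b - a) / 2 := hL₃ ▸ le_self_pow₀ hL₁ three_ne_zero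
  obtain ⟨x₀, hx₀, hhx₀⟩ := hmax
  obtain ⟨q, hq, s, hfar, hsub, hnear⟩ := exists_Icc_subset_uIcc_far_endpoint hx₀ hL₀.le hL_le
  refine ⟨L, s, le_rfl, hsub.trans (uIcc_subset_Icc hx₀ hq), fun x hx => ?_⟩
  calc 1 - 1 / L ^ 2 = 1 - L / ((b - a) / 2) := by rw [← hL₃]; field_simp
    _ ≤ 1 - |x - x₀| / |q - x₀| := by gcongr; exact hnear x hx
    _ ≤ h x := hconc.one_sub_abs_div_le_of_mem_uIcc hx₀ hq hhx₀ (hrange q hq).1 (hsub hx)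
end
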